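/- Let c = 2^{2/3} (the real cube root of 4's square root convention: c³ = 4, c² = 2^{4/3}). For all complex numbers t, f, g, a, the function ε ↦ (ε³/4)·F_IV(εt/c − 1/ε³, c·f/ε + 1/ε³, c²·g/ε², −2a − 1/(2ε⁶), −1/(2ε¹²)) tends to 2f³ + tf + a as ε → 0 along nonzero complex values of ε (punctured neighborhood filter of 0 in ℂ). -/

import Mathlib

/-!
With `w = c f ε² + 1 = ε³ u`, the scaled right-hand side is a polynomial in `ε` divided by `w`,
for every `c ≠ 0`: in the numerator the `ε⁻⁶` terms combine to `(3w⁴ - 8w³ + 6w² - 1)/8 = (w - 1)³(3w + 1)/8`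
and the `ε⁻²` terms to `t w² (w - 1)/(c ε²)`, both regular since `w - 1 = c f ε²`.
At `ε = 0` this leaves `t f + a + c³ f³ / 2`, which is `2 f³ + t f + a` because `c³ = 4`.
-/

/-- Right-hand side of the fourth Painlevé equation:
`F_IV(x,u,v,α,β) = v²/(2u) + (3/2)u³ + 4xu² + 2(x²−α)u + β/u`. -/
noncomputable def FIV (x u v α β : ℂ) : ℂ :=
  v ^ 2 / (2 * u) + (3 / 2) * u ^ 3 + 4 * x * u ^ 2 + 2 * (x ^ 2 - α) * u + β / u

open Filter Topology

lemma FIV_degeneration_eq {c ε : ℂ} (t f g a : ℂ) (hc : c ≠ 0) (hε : ε ≠ 0)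
    (hw : c * f * ε ^ 2 + 1 ≠ 0) :
    (ε ^ 3 / 4) * FIV (ε * t / c - 1 / ε ^ 3) (c * f / ε + 1 / ε ^ 3) (c ^ 2 * g / ε ^ 2)
        (-2 * a - 1 / (2 * ε ^ 6)) (-1 / (2 * ε ^ 12)) =
      ((t * f + a + ε ^ 2 * t ^ 2 / (2 * c ^ 2)) * (c * f * ε ^ 2 + 1) ^ 2 + c ^ 3 * f ^ 3 / 2
        + c ^ 4 * (g ^ 2 + 3 * f ^ 4) * ε ^ 2 / 8) / (c * f * ε ^ 2 + 1) := by
  have hu : c * f / ε + 1 / ε ^ 3 = (c * f * ε ^ 2 + 1) / ε ^ 3 := by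
    field_simp
  rw [FIV, hu]
  field_simp
  ring

lemma FIV_degeneration_tendsto {c : ℂ} (t f g a : ℂ) (hc : c ≠ 0) :
    Tendsto (fun ε : ℂ => (ε ^ 3 / 4) *
        FIV (ε * t / c - 1 / ε ^ 3) (c * f / ε + 1 / ε ^ 3) (c ^ 2 * g / ε ^ 2)
          (-2 * a - 1 / (2 * ε ^ 6)) (-1 / (2 * ε ^ 12)))
      (𝓝[≠] 0) (𝓝 (t * f + a + c ^ 3 * f ^ 3 / 2)) := by
  set R : ℂ → ℂ := fun ε => ((t * f + a + ε ^ 2 * t ^ 2 / (2 * c ^ 2)) * (c * f * ε ^ 2 + 1) ^ 2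
    + c ^ 3 * f ^ 3 / 2 + c ^ 4 * (g ^ 2 + 3 * f ^ 4) * ε ^ 2 / 8) / (c * f * ε ^ 2 + 1)
  have hR : ContinuousAt R 0 := by
    apply ContinuousAt.div (by fun_prop) (by fun_prop)
    simp
  have hw : ∀ᶠ ε in 𝓝 (0 : ℂ), c * f * ε ^ 2 + 1 ≠ 0 :=
    (show ContinuousAt (fun ε : ℂ => c * f * ε ^ 2 + 1) 0 by fun_prop).eventually_ne (by simp)
  have hR0 : R 0 = t * f + a + c ^ 3 * f ^ 3 / 2 := by simp [R]
  refine (hR0 ▸ hR.tendsto.mono_left nhdsWithin_le_nhds).congr' ?_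
  filter_upwards [nhdsWithin_le_nhds hw, self_mem_nhdsWithin] with ε hwε hε
  exact (FIV_degeneration_eq t f g a hc hε hwε).symm

lemma two_cpow_two_div_three_pow_three : ((2 : ℂ) ^ ((2 : ℂ) / 3)) ^ 3 = 4 := by
  rw [← Complex.cpow_nat_mul]
  norm_num

theorem stmt_4 (t f g a : ℂ) (c : ℂ) (hc : c = (2 : ℂ) ^ ((2 : ℂ) / 3)) :
    Filter.Tendsto
      (fun ε : ℂ =>
        (ε ^ 3 / 4) *
          FIV (ε * t / c - 1 / ε ^ 3) (c * f / ε + 1 / ε ^ 3) (c ^ 2 * g / ε ^ 2)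
            (-2 * a - 1 / (2 * ε ^ 6)) (-1 / (2 * ε ^ 12)))
      (nhdsWithin 0 {0}ᶜ) (nhds (2 * f ^ 3 + t * f + a)) := by
  have hc3 : c ^ 3 = 4 := hc ▸ two_cpow_two_div_three_pow_three
  have hc0 : c ≠ 0 := by rintro rfl; norm_num at hc3
  convert FIV_degeneration_tendsto t f g a hc0 using 2
  rw [hc3]
  ring
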